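/- Let u be a nonzero lightlike vector in L^{n+1} with u₀ > 0, v₀ a unit vector in R^m, y₀ ∈ R^m and a ∈ R. The function F(x,y) = ⟨x,u⟩_L · exp(a⟨y - y₀, v₀⟩) on H^n × R^m satisfies ΔF = (n + a²)F, hence F is an isoparametric function all of whose level sets are regular. -/

import Mathlib

/-!
Along the geodesic `cosh t • x + sinh t • v` of `H^n`, the linear function `⟨·, u⟩_L` is a
combination of `cosh` and `sinh`, so its second derivative at `0` equals its value: each of the
`n` hyperbolic directions contributes `F`. Along the coordinate line `y + t • e_j` only the
exponential factor varies and contributes `a² ⟨e_j, v₀⟩² F`; these sum to `a² F` by Parseval.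
The gradient can only vanish if `u` is a multiple of `x`, which is impossible for a nonzero
lightlike `u` and a timelike `x`.
-/

open RealInnerProductSpace

/-- The Lorentz inner product on L^{n+1}. -/
noncomputable def lorentzInner {n : ℕ} (x y : EuclideanSpace ℝ (Fin (n + 1))) : ℝ :=
  -(x 0 * y 0) + ∑ i : Fin n, x i.succ * y i.succ

section LorentzInner

variable {n : ℕ}

lemma lorentzInner_comm (x y : EuclideanSpace ℝ (Fin (n + 1))) :
    lorentzInner x y = lorentzInner y x := by
  simp only [lorentzInner, mul_comm]

lemma lorentzInner_add_left (x y u : EuclideanSpace ℝ (Fin (n + 1))) :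
    lorentzInner (x + y) u = lorentzInner x u + lorentzInner y u := by
  simp only [lorentzInner, PiLp.add_apply, add_mul, Finset.sum_add_distrib]
  ring

lemma lorentzInner_smul_left (c : ℝ) (x u : EuclideanSpace ℝ (Fin (n + 1))) :
    lorentzInner (c • x) u = c * lorentzInner x u := by
  simp only [lorentzInner, PiLp.smul_apply, smul_eq_mul, mul_assoc, ← Finset.mul_sum]
  ring

lemma lorentzInner_smul_right (c : ℝ) (x u : EuclideanSpace ℝ (Fin (n + 1))) :
    lorentzInner x (c • u) = c * lorentzInner x u := by
  rw [lorentzInner_comm, lorentzInner_smul_left, lorentzInner_comm]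

lemma add_lorentzInner_smul_ne_zero {x u : EuclideanSpace ℝ (Fin (n + 1))}
    (hx : lorentzInner x x ≠ 0) (hu_light : lorentzInner u u = 0) (hu_ne : u ≠ 0) :
    u + lorentzInner x u • x ≠ 0 := by
  intro h
  set c := lorentzInner x u
  have hu : u = (-c) • x := by rw [neg_smul]; exact eq_neg_of_add_eq_zero_left h
  have hc : c ^ 2 * lorentzInner x x = 0 := by
    rw [← hu_light, hu, lorentzInner_smul_left, lorentzInner_smul_right]
    ring
  have hc0 : c = 0 := pow_eq_zero_iff two_ne_zero |>.mp ((mul_eq_zero.mp hc).resolve_right hx)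
  exact hu_ne (by rw [hu, hc0, neg_zero, zero_smul])

end LorentzInner

lemma iteratedDeriv_two_eq_of_hasDerivAt {𝕜 F : Type*} [NontriviallyNormedField 𝕜]
    [NormedAddCommGroup F] [NormedSpace 𝕜 F] {f f' : 𝕜 → F} {c : F} {x : 𝕜}
    (hf : ∀ t, HasDerivAt f (f' t) t) (hf' : HasDerivAt f' c x) :
    iteratedDeriv 2 f x = c := by
  rw [iteratedDeriv_succ, iteratedDeriv_one, funext fun t => (hf t).deriv]
  exact hf'.deriv

lemma iteratedDeriv_two_cosh_mul_add_sinh_mul (A B : ℝ) :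
    iteratedDeriv 2 (fun t => Real.cosh t * A + Real.sinh t * B) 0 = A := by
  have hf' := ((Real.hasDerivAt_sinh 0).mul_const A).add ((Real.hasDerivAt_cosh 0).mul_const B)
  simp only [Real.cosh_zero, Real.sinh_zero, one_mul, zero_mul, add_zero] at hf'
  exact iteratedDeriv_two_eq_of_hasDerivAt
    (fun t => ((Real.hasDerivAt_cosh t).mul_const A).add ((Real.hasDerivAt_sinh t).mul_const B))
    hf'

lemma iteratedDeriv_two_lorentzInner_hyperbola {n : ℕ} (x v u : EuclideanSpace ℝ (Fin (n + 1)))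
    (C : ℝ) :
    iteratedDeriv 2 (fun t => lorentzInner (Real.cosh t • x + Real.sinh t • v) u * C) 0
      = lorentzInner x u * C := by
  simp only [lorentzInner_add_left, lorentzInner_smul_left, add_mul, mul_assoc]
  exact iteratedDeriv_two_cosh_mul_add_sinh_mul _ _

lemma iteratedDeriv_two_mul_exp_inner_line {E : Type*} [NormedAddCommGroup E]
    [InnerProductSpace ℝ E] (K a : ℝ) (y y₀ v₀ w : E) :
    iteratedDeriv 2 (fun t : ℝ => K * Real.exp (a * ⟪y + t • w - y₀, v₀⟫)) 0
      = (a * ⟪w, v₀⟫) ^ 2 * (K * Real.exp (a * ⟪y - y₀, v₀⟫)) := by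
  have hline : ∀ t : ℝ, a * ⟪y + t • w - y₀, v₀⟫ = a * ⟪y - y₀, v₀⟫ + t * (a * ⟪w, v₀⟫) := by
    intro t
    rw [add_sub_right_comm, inner_add_left, real_inner_smul_left]
    ring
  simp only [hline]
  set b := a * ⟪w, v₀⟫
  set c := a * ⟪y - y₀, v₀⟫
  have hexp : ∀ t : ℝ, HasDerivAt (fun t => Real.exp (c + t * b)) (b * Real.exp (c + t * b)) t :=
    fun t => by simpa [mul_comm] using (((hasDerivAt_id t).mul_const b).const_add c).exp
  have hf' := ((hexp 0).const_mul b).const_mul K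
  simp only [zero_mul, add_zero] at hf'
  rw [iteratedDeriv_two_eq_of_hasDerivAt (fun t => (hexp t).const_mul K) hf']
  ring

theorem stmt3_general (n m : ℕ) (a : ℝ)
    (u : EuclideanSpace ℝ (Fin (n + 1)))
    (hu_light : lorentzInner u u = 0) (hu_ne : u ≠ 0)
    (v₀ : EuclideanSpace ℝ (Fin m)) (hv₀ : ‖v₀‖ = 1)
    (y₀ : EuclideanSpace ℝ (Fin m))
    (F : EuclideanSpace ℝ (Fin (n + 1)) → EuclideanSpace ℝ (Fin m) → ℝ)
    (hF : ∀ x y, F x y = lorentzInner x u * Real.exp (a * ⟪y - y₀, v₀⟫)) :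
    (∀ x, lorentzInner x x = -1 → 0 < x 0 → ∀ y,
      ∀ vH : Fin n → EuclideanSpace ℝ (Fin (n + 1)),
        (∀ i j, lorentzInner (vH i) (vH j) = if i = j then 1 else 0) →
        (∀ i, lorentzInner (vH i) x = 0) →
        (∑ i : Fin n,
            iteratedDeriv 2 (fun t : ℝ => F (Real.cosh t • x + Real.sinh t • vH i) y) 0)
          + (∑ j : Fin m,
              iteratedDeriv 2 (fun t : ℝ => F x (y + t • EuclideanSpace.single j 1)) 0)
          = ((n : ℝ) + a ^ 2) * F x y) ∧
    (∀ x, lorentzInner x x = -1 → 0 < x 0 → ∀ y,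
      ¬(Real.exp (a * ⟪y - y₀, v₀⟫) • (u + lorentzInner x u • x) = 0 ∧
        (a * lorentzInner x u * Real.exp (a * ⟪y - y₀, v₀⟫)) • v₀
          = (0 : EuclideanSpace ℝ (Fin m)))) := by
  have hparseval : ∑ j : Fin m, ⟪EuclideanSpace.single j (1 : ℝ), v₀⟫ ^ 2 = 1 := by
    simpa [EuclideanSpace.basisFun_apply, hv₀] using
      (EuclideanSpace.basisFun (Fin m) ℝ).sum_sq_inner_right v₀
  refine ⟨fun x _ _ y vH _ _ => ?_, fun x hx _ y ⟨hgrad, _⟩ => ?_⟩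
  · simp only [hF, iteratedDeriv_two_lorentzInner_hyperbola,
      iteratedDeriv_two_mul_exp_inner_line, Finset.sum_const, Finset.card_univ, Fintype.card_fin,
      nsmul_eq_mul, mul_pow, ← Finset.mul_sum, ← Finset.sum_mul, hparseval]
    ring
  · refine add_lorentzInner_smul_ne_zero (by rw [hx]; norm_num) hu_light hu_ne ?_
    exact (smul_eq_zero.mp hgrad).resolve_left (Real.exp_ne_zero _)

theorem stmt3 (n m : ℕ) (a : ℝ)
    (u : EuclideanSpace ℝ (Fin (n + 1)))
    (hu_light : lorentzInner u u = 0) (hu_ne : u ≠ 0) (hu0 : 0 < u 0)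
    (v₀ : EuclideanSpace ℝ (Fin m)) (hv₀ : ‖v₀‖ = 1)
    (y₀ : EuclideanSpace ℝ (Fin m))
    (F : EuclideanSpace ℝ (Fin (n + 1)) → EuclideanSpace ℝ (Fin m) → ℝ)
    (hF : ∀ x y, F x y = lorentzInner x u * Real.exp (a * ⟪y - y₀, v₀⟫)) :
    (∀ x, lorentzInner x x = -1 → 0 < x 0 → ∀ y,
      ∀ vH : Fin n → EuclideanSpace ℝ (Fin (n + 1)),
        (∀ i j, lorentzInner (vH i) (vH j) = if i = j then 1 else 0) →
        (∀ i, lorentzInner (vH i) x = 0) →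
        (∑ i : Fin n,
            iteratedDeriv 2 (fun t : ℝ => F (Real.cosh t • x + Real.sinh t • vH i) y) 0)
          + (∑ j : Fin m,
              iteratedDeriv 2 (fun t : ℝ => F x (y + t • EuclideanSpace.single j 1)) 0)
          = ((n : ℝ) + a ^ 2) * F x y) ∧
    (∀ x, lorentzInner x x = -1 → 0 < x 0 → ∀ y,
      ¬(Real.exp (a * ⟪y - y₀, v₀⟫) • (u + lorentzInner x u • x) = 0 ∧
        (a * lorentzInner x u * Real.exp (a * ⟪y - y₀, v₀⟫)) • v₀
          = (0 : EuclideanSpace ℝ (Fin m)))) :=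
  stmt3_general n m a u hu_light hu_ne v₀ hv₀ y₀ F hF
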